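/- Let (M_n)_{n∈ℕ} be any sequence of positive reals and let K* = { irrational x ∈ ℝ : Σ_{k≥n} (log a_{k+1}(x))/q_k(x) ≤ M_n for all n ∈ ℕ }. Define Q₋₁ = 0, Q₀ = 1 and Q_{n+1} = e^{M_n Q_n} Q_n + Q_{n−1}. Then for every x ∈ K* and every n ∈ ℕ, the denominators of the convergents of x satisfy F_n ≤ q_n(x) ≤ Q_n. In particular, for each n the denominators q_n(x) are uniformly bounded over x ∈ K*. -/

import Mathlib

/-!
For irrational `x` every partial quotient `a_{k+1}` is at least `1`, so `q_{n+1} = a_{n+1} q_n + q_{n-1}`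
dominates the Fibonacci recursion. For `x ∈ K*` the first term of the `n`-th tail of the Brjuno sum
gives `log a_{n+1} ≤ M_n q_n`, i.e. `a_{n+1} ≤ exp (M_n q_n)`, and since the recursion defining `Q_n`
is monotone in `a_{n+1}`, `q_n` and `q_{n-1}`, induction gives `q_n ≤ Q_n`.
-/

open scoped ENNReal Topology

noncomputable def gaussIter (x : ℝ) : ℕ → ℝ
  | 0 => Int.fract x
  | n + 1 => Int.fract (gaussIter x n)⁻¹

noncomputable def pquot (x : ℝ) : ℕ → ℤ
  | 0 => ⌊x⌋
  | n + 1 => ⌊(gaussIter x n)⁻¹⌋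

noncomputable def qden (x : ℝ) : ℕ → ℤ
  | 0 => 1
  | 1 => pquot x 1
  | n + 2 => pquot x (n + 2) * qden x (n + 1) + qden x n

noncomputable def pnum (x : ℝ) : ℕ → ℤ
  | 0 => pquot x 0
  | 1 => pquot x 1 * pquot x 0 + 1
  | n + 2 => pquot x (n + 2) * pnum x (n + 1) + pnum x n

noncomputable def brjunoTerm (x : ℝ) (k : ℕ) : ℝ :=
  Real.log (pquot x (k + 1)) / (qden x k : ℝ)

open Classical in
noncomputable def brjuno (x : ℝ) : ℝ≥0∞ :=
  if Irrational x then ∑' k, ENNReal.ofReal (brjunoTerm x k) else ⊤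

noncomputable def brjunoTailE (x : ℝ) (n : ℕ) : ℝ≥0∞ :=
  ∑' k, ENNReal.ofReal (brjunoTerm x (n + k))

noncomputable def cfLen (x : ℝ) : ℕ := sInf {n | gaussIter x n = 0}

noncomputable def brjunoFinite (x : ℝ) : ℝ :=
  ∑ k ∈ Finset.range (cfLen x), Real.log (pquot x (k + 1)) / (qden x k : ℝ)

def brjunoSuper (t : ℝ) : Set ℝ := {x | ENNReal.ofReal t < brjuno x}

def IsCompOf (A : Set ℝ) (a b : ℝ) : Prop := ∃ x ∈ A, connectedComponentIn A x = Set.Ioo a b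

def diamond (κ a b : ℝ) : Set ℂ :=
  {z : ℂ | a < z.re ∧ z.re < b ∧ |z.im| ≤ κ * min (z.re - a) (b - z.re)}

noncomputable def CMset (κ M : ℝ) : Set ℂ :=
  (fun ξ : ℂ => Complex.exp (2 * Real.pi * Complex.I * ξ)) ''
    (⋃ (a : ℝ) (b : ℝ) (_ : IsCompOf (brjunoSuper M) a b), diamond κ a b)ᶜ ∪ {0}

def KstarR (Ms : ℕ → ℝ) : Set ℝ :=
  {x | Irrational x ∧ ∀ n, brjunoTailE x n ≤ ENNReal.ofReal (Ms n)}

noncomputable def CstarSet (κ : ℝ) (Ms : ℕ → ℝ) : Set ℂ :=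
  (fun ξ : ℂ => Complex.exp (2 * Real.pi * Complex.I * ξ)) ''
    (⋃ (a : ℝ) (b : ℝ) (_ : IsCompOf (KstarR Ms)ᶜ a b), diamond κ a b)ᶜ ∪ {0}

noncomputable def Qbnd (Ms : ℕ → ℝ) : ℕ → ℝ
  | 0 => 1
  | 1 => Real.exp (Ms 0)
  | n + 2 => Real.exp (Ms (n + 1) * Qbnd Ms (n + 1)) * Qbnd Ms (n + 1) + Qbnd Ms n

theorem Irrational.int_fract {x : ℝ} (hx : Irrational x) : Irrational (Int.fract x) :=
  hx.sub_intCast ⌊x⌋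

theorem Irrational.gaussIter {x : ℝ} (hx : Irrational x) (n : ℕ) : Irrational (gaussIter x n) := by
  induction n with
  | zero => exact hx.int_fract
  | succ n ih => exact ih.inv.int_fract

theorem gaussIter_mem_Ioo {x : ℝ} (hx : Irrational x) (n : ℕ) : gaussIter x n ∈ Set.Ioo 0 1 := by
  cases n with
  | zero => exact ⟨(Int.fract_nonneg x).lt_of_ne' (hx.gaussIter 0).ne_zero, Int.fract_lt_one x⟩
  | succ n =>
    exact ⟨(Int.fract_nonneg _).lt_of_ne' (hx.gaussIter (n + 1)).ne_zero, Int.fract_lt_one _⟩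

theorem one_le_pquot_succ {x : ℝ} (hx : Irrational x) (n : ℕ) : 1 ≤ pquot x (n + 1) := by
  obtain ⟨hpos, hlt⟩ := gaussIter_mem_Ioo hx n
  exact Int.le_floor.mpr (by exact_mod_cast (one_lt_inv₀ hpos).mpr hlt |>.le)

theorem qden_add_two (x : ℝ) (n : ℕ) :
    qden x (n + 2) = pquot x (n + 2) * qden x (n + 1) + qden x n := rfl

theorem fib_succ_le_qden {x : ℝ} (hx : Irrational x) (n : ℕ) : (Nat.fib (n + 1) : ℤ) ≤ qden x n := by
  induction n using Nat.twoStepInduction with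
  | zero => simp [qden]
  | one => simpa [qden] using one_le_pquot_succ hx 0
  | more n ih₀ ih₁ =>
    have ha := one_le_pquot_succ hx (n + 1)
    have hq : 0 ≤ qden x (n + 1) := le_trans (by positivity) ih₁
    rw [qden_add_two, Nat.fib_add_two, Nat.cast_add]
    nlinarith

theorem qden_pos {x : ℝ} (hx : Irrational x) (n : ℕ) : 0 < qden x n :=
  lt_of_lt_of_le (by exact_mod_cast Nat.fib_pos.mpr n.succ_pos) (fib_succ_le_qden hx n)

theorem brjunoTerm_le_of_mem_KstarR {Ms : ℕ → ℝ} {x : ℝ} (hx : x ∈ KstarR Ms) (n : ℕ)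
    (hM : 0 ≤ Ms n) : brjunoTerm x n ≤ Ms n := by
  have h : ENNReal.ofReal (brjunoTerm x (n + 0)) ≤ brjunoTailE x n := ENNReal.le_tsum 0
  exact (ENNReal.ofReal_le_ofReal_iff hM).mp (h.trans (hx.2 n))

theorem pquot_succ_le_exp_of_mem_KstarR {Ms : ℕ → ℝ} {x : ℝ} (hx : x ∈ KstarR Ms) (n : ℕ)
    (hM : 0 ≤ Ms n) : (pquot x (n + 1) : ℝ) ≤ Real.exp (Ms n * qden x n) := by
  have hq : (0 : ℝ) < qden x n := by exact_mod_cast qden_pos hx.1 n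
  have ha : (0 : ℝ) < pquot x (n + 1) := by exact_mod_cast one_le_pquot_succ hx.1 n
  rw [← Real.log_le_iff_le_exp ha, ← div_le_iff₀ hq]
  exact brjunoTerm_le_of_mem_KstarR hx n hM

theorem qden_le_Qbnd_of_mem_KstarR {Ms : ℕ → ℝ} (hM : ∀ n, 0 ≤ Ms n) {x : ℝ} (hx : x ∈ KstarR Ms)
    (n : ℕ) : (qden x n : ℝ) ≤ Qbnd Ms n := by
  induction n using Nat.twoStepInduction with
  | zero => simp [qden, Qbnd]
  | one => simpa [qden, Qbnd] using pquot_succ_le_exp_of_mem_KstarR hx 0 (hM 0)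
  | more n ih₀ ih₁ =>
    have hq : (0 : ℝ) ≤ qden x (n + 1) := by exact_mod_cast (qden_pos hx.1 (n + 1)).le
    have ha : (pquot x (n + 2) : ℝ) ≤ Real.exp (Ms (n + 1) * Qbnd Ms (n + 1)) :=
      (pquot_succ_le_exp_of_mem_KstarR hx (n + 1) (hM (n + 1))).trans
        (Real.exp_le_exp.mpr (mul_le_mul_of_nonneg_left ih₁ (hM (n + 1))))
    rw [qden_add_two, Int.cast_add, Int.cast_mul, Qbnd]
    gcongr

/-- a priori bounds `F_n ≤ q_n(x) ≤ Q_n` for the denominators of the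
convergents of points of `K*`; in particular they are uniformly bounded. -/
theorem statement15 (Ms : ℕ → ℝ) (hMpos : ∀ n, 0 < Ms n) :
    (∀ x ∈ KstarR Ms, ∀ n : ℕ,
      ((Nat.fib (n + 1) : ℝ) ≤ (qden x n : ℝ) ∧ (qden x n : ℝ) ≤ Qbnd Ms n)) ∧
    (∀ n : ℕ, ∃ Cb : ℝ, ∀ x ∈ KstarR Ms, (qden x n : ℝ) ≤ Cb) := by
  have hM : ∀ n, 0 ≤ Ms n := fun n => (hMpos n).le
  refine ⟨fun x hx n => ⟨?_, qden_le_Qbnd_of_mem_KstarR hM hx n⟩,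
    fun n => ⟨Qbnd Ms n, fun x hx => qden_le_Qbnd_of_mem_KstarR hM hx n⟩⟩
  exact_mod_cast fib_succ_le_qden hx.1 n
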